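/- arXiv:math/0607751 — 4 statements merged into one kernel-verified Lean document; each statement's English description precedes it below -/
import Mathlib

section
/- The set N⁻ = {(A,B) ∈ Mₙ × Mₙ : det(B - A) < 0} is an open and path-connected subset of the space of pairs of linear maps on ℝⁿ (for n ≥ 1). -/
open Matrix Matrix.TransvectionStruct

namespace NminusAux

variable {n : ℕ}

abbrev Mat (n : ℕ) := Matrix (Fin n) (Fin n) ℝ

/-- `JoinedIn` from a continuous `ℝ`-parametrized path. -/
lemma joinedIn_of_path {X : Type*} [TopologicalSpace X] {s : Set X} {f : ℝ → X}
    (hf : Continuous f) (hmem : ∀ t ∈ Set.Icc (0:ℝ) 1, f t ∈ s) :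
    JoinedIn s (f 0) (f 1) :=
  ⟨⟨⟨fun t => f t.1, hf.comp continuous_subtype_val⟩, rfl, rfl⟩,
    fun t => hmem t.1 t.2⟩

/-- Scale the coefficient of a transvection by `1 - t`. -/
def scale (t : ℝ) (ts : TransvectionStruct (Fin n) ℝ) : TransvectionStruct (Fin n) ℝ :=
  ⟨ts.i, ts.j, ts.hij, (1 - t) * ts.c⟩

lemma scale_zero (ts : TransvectionStruct (Fin n) ℝ) : scale 0 ts = ts := by
  cases ts; simp [scale]

lemma continuous_scale (ts : TransvectionStruct (Fin n) ℝ) :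
    Continuous fun t : ℝ => toMatrix (scale t ts) := by
  cases' ts with p q hpq c
  simp only [scale, toMatrix_mk, transvection]
  refine continuous_const.add (continuous_matrix fun a b => ?_)
  by_cases h : p = a ∧ q = b <;> simp [h] <;> fun_prop

lemma det_scaled_prod (t : ℝ) (L : List (TransvectionStruct (Fin n) ℝ)) :
    ((L.map fun ts => toMatrix (scale t ts)).prod).det = 1 := by
  have : (L.map fun ts => toMatrix (scale t ts)) = ((L.map (scale t)).map toMatrix) := by
    simp [List.map_map]
  rw [this, det_toMatrix_prod]

/-- Multiplying on the left and right by products of transvections stays in the same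
path component of `{det < 0}`. -/
lemma transvec_joined (L L' : List (TransvectionStruct (Fin n) ℝ)) (X : Mat n)
    (hX : X.det < 0) :
    JoinedIn {C : Mat n | C.det < 0}
      ((L.map toMatrix).prod * X * (L'.map toMatrix).prod) X := by
  have hf : Continuous fun t : ℝ =>
      (L.map fun ts => toMatrix (scale t ts)).prod * X *
        (L'.map fun ts => toMatrix (scale t ts)).prod :=
    ((continuous_list_prod L fun ts _ => continuous_scale ts).mul continuous_const).mul
      (continuous_list_prod L' fun ts _ => continuous_scale ts)
  have hmem : ∀ t ∈ Set.Icc (0:ℝ) 1,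
      ((L.map fun ts => toMatrix (scale t ts)).prod * X *
        (L'.map fun ts => toMatrix (scale t ts)).prod) ∈ {C : Mat n | C.det < 0} := by
    intro t _
    simp only [Set.mem_setOf_eq, det_mul, det_scaled_prod, one_mul, mul_one]
    exact hX
  have h := joinedIn_of_path hf hmem
  have h0 : (fun ts => toMatrix (scale (0:ℝ) ts)) = (toMatrix (n := Fin n) (R := ℝ)) := by
    funext ts; rw [scale_zero]
  have h1 : ∀ (M : List (TransvectionStruct (Fin n) ℝ)),
      (M.map fun ts => toMatrix (scale (1:ℝ) ts)).prod = 1 := by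
    intro M
    refine List.prod_eq_one fun x hx => ?_
    simp only [List.mem_map] at hx
    obtain ⟨ts, -, rfl⟩ := hx
    cases ts; simp [scale, toMatrix_mk]
  rw [h0] at h
  rw [h1, h1, one_mul, mul_one] at h
  exact h

/-- A list of transvections whose product is the diagonal matrix with `-1` at positions
`p` and `q` and `1` elsewhere. -/
def flipL (p q : Fin n) (h : p ≠ q) : List (TransvectionStruct (Fin n) ℝ) :=
  [⟨p, q, h, 1⟩, ⟨q, p, h.symm, -1⟩, ⟨p, q, h, 1⟩, ⟨p, q, h, 1⟩, ⟨q, p, h.symm, -1⟩, ⟨p, q, h, 1⟩]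

lemma flipL_prod_mul (p q : Fin n) (h : p ≠ q) (d : Fin n → ℝ) :
    ((flipL p q h).map toMatrix).prod * diagonal d
      = diagonal (fun k => if k = p ∨ k = q then -d k else d k) := by
  ext a b
  simp only [flipL, List.map_cons, List.map_nil, List.prod_cons, List.prod_nil, mul_one,
    toMatrix_mk, Matrix.mul_assoc]
  rcases eq_or_ne a p with rfl | hap
  · simp only [transvection_mul_apply_same, transvection_mul_apply_of_ne _ _ _ _ h,
      transvection_mul_apply_of_ne _ _ _ _ h.symm, ne_eq]
    rcases eq_or_ne b a with rfl | hba
    · simp [diagonal_apply, h, h.symm]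
    · rcases eq_or_ne b q with rfl | hbq
      · simp [diagonal_apply, h, h.symm, hba, Ne.symm hba]
      · simp [diagonal_apply, h, h.symm, hba, Ne.symm hba, hbq, Ne.symm hbq]
  · rcases eq_or_ne a q with rfl | haq
    · simp only [transvection_mul_apply_same, transvection_mul_apply_of_ne _ _ _ _ hap,
        transvection_mul_apply_of_ne _ _ _ _ h, transvection_mul_apply_of_ne _ _ _ _ h.symm, ne_eq]
      rcases eq_or_ne b a with rfl | hba
      · simp [diagonal_apply, h, h.symm]
      · rcases eq_or_ne b p with rfl | hbp
        · simp [diagonal_apply, h, h.symm, hba, Ne.symm hba]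
        · simp [diagonal_apply, h, h.symm, hba, Ne.symm hba, hbp, Ne.symm hbp]
    · simp [transvection_mul_apply_of_ne _ _ _ _ hap, transvection_mul_apply_of_ne _ _ _ _ haq,
        diagonal_apply, hap, haq]

/-- Joining two sign-flipped diagonal matrices inside `{det < 0}`. -/
lemma flip_joined (p q : Fin n) (h : p ≠ q) (d : Fin n → ℝ) (hd : ∏ i, d i < 0) :
    JoinedIn {C : Mat n | C.det < 0}
      (diagonal fun k => if k = p ∨ k = q then -d k else d k) (diagonal d) := by
  have J := transvec_joined (flipL p q h) [] (diagonal d)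
      (by rw [det_diagonal]; exact hd)
  rwa [List.map_nil, List.prod_nil, mul_one, flipL_prod_mul] at J

lemma prod_flip (p q : Fin n) (h : p ≠ q) (d : Fin n → ℝ) :
    (∏ i, (fun k => if k = p ∨ k = q then -d k else d k) i) = ∏ i, d i := by
  have := congrArg det (flipL_prod_mul p q h d)
  rw [det_mul, det_toMatrix_prod, one_mul, det_diagonal, det_diagonal] at this
  exact this.symm

lemma interp_pos {t x y : ℝ} (ht0 : 0 ≤ t) (ht1 : t ≤ 1) (hxx : 0 < x * x)
    (hxy : 0 < y * x) : 0 < ((1 - t) * x + t * y) * x := by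
  rcases lt_or_ge t 1 with h' | h'
  · nlinarith [mul_pos (show (0:ℝ) < 1 - t by linarith) hxx, mul_nonneg ht0 hxy.le]
  · have ht : t = 1 := le_antisymm ht1 h'
    subst ht
    nlinarith [hxy]

/-- Linear interpolation between diagonal matrices with entrywise matching signs. -/
lemma diag_linear_joined (d e : Fin n → ℝ) (hsign : ∀ i, 0 < d i * e i)
    (hd : ∏ i, d i < 0) :
    JoinedIn {C : Mat n | C.det < 0} (diagonal d) (diagonal e) := by
  have hf : Continuous fun t : ℝ => diagonal (fun i => (1 - t) * d i + t * e i) := by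
    refine continuous_matrix fun a b => ?_
    by_cases hab : a = b <;> simp [diagonal_apply, hab] <;> fun_prop
  have hmem : ∀ t ∈ Set.Icc (0:ℝ) 1,
      diagonal (fun i => (1 - t) * d i + t * e i) ∈ {C : Mat n | C.det < 0} := by
    intro t ht
    obtain ⟨ht0, ht1⟩ := ht
    simp only [Set.mem_setOf_eq, det_diagonal]
    have key : ∀ i, 0 < ((1 - t) * d i + t * e i) * d i := by
      intro i
      have hne : d i ≠ 0 := by
        intro h0
        have := hsign i
        rw [h0] at this
        simp at this
      have hxx : 0 < d i * d i := mul_self_pos.mpr hne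
      have hxy : 0 < e i * d i := by have := hsign i; nlinarith [mul_self_pos.mpr hne]
      exact interp_pos ht0 ht1 hxx hxy
    have hpos : 0 < (∏ i, ((1 - t) * d i + t * e i)) * ∏ i, d i := by
      rw [← Finset.prod_mul_distrib]
      exact Finset.prod_pos fun i _ => key i
    nlinarith
  have h := joinedIn_of_path hf hmem
  have h0 : (fun i => (1 - (0:ℝ)) * d i + 0 * e i) = d := by funext i; ring
  have h1 : (fun i => (1 - (1:ℝ)) * d i + 1 * e i) = e := by funext i; ring
  rwa [h0, h1] at h

/-- Any diagonal matrix with negative determinant can be joined to the reference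
matrix `diag(-1, 1, …, 1)` inside `{det < 0}`. -/
lemma diag_joined (z : Fin n) :
    ∀ (k : ℕ) (d : Fin n → ℝ),
      (Finset.univ.filter fun i => d i < 0).card = k → (∀ i, d i ≠ 0) → ∏ i, d i < 0 →
      JoinedIn {C : Mat n | C.det < 0} (diagonal d)
        (diagonal fun i => if i = z then (-1:ℝ) else 1) := by
  intro k
  induction k using Nat.strong_induction_on with
  | _ k IH =>
    intro d hcard hd0 hprod
    have hpos : ∀ i, i ∉ Finset.univ.filter (fun i => d i < 0) → 0 < d i := by
      intro i hi
      rcases (hd0 i).lt_or_gt with h | h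
      · exact absurd (Finset.mem_filter.mpr ⟨Finset.mem_univ i, h⟩) hi
      · exact h
    match k, hcard with
    | 0, hcard =>
      exfalso
      have : 0 < ∏ i, d i := Finset.prod_pos fun i _ => hpos i (by
        rw [Finset.card_eq_zero.mp hcard]; exact Finset.notMem_empty i)
      linarith
    | 1, hcard =>
      obtain ⟨a, ha⟩ := Finset.card_eq_one.mp hcard
      have hda : d a < 0 := by
        have hmemA : a ∈ Finset.univ.filter fun i => d i < 0 := by
          rw [ha]; exact Finset.mem_singleton_self a
        exact (Finset.mem_filter.mp hmemA).2
      have hdi : ∀ i, i ≠ a → 0 < d i := fun i hi =>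
        hpos i (by rw [ha, Finset.mem_singleton]; exact hi)
      by_cases haz : a = z
      · subst haz
        refine diag_linear_joined d _ (fun i => ?_) hprod
        by_cases hia : i = a
        · subst hia; rw [if_pos rfl]
          nlinarith
        · rw [if_neg hia]
          have := hdi i hia
          linarith
      · have hza : z ≠ a := Ne.symm haz
        have J1 := flip_joined z a hza d hprod
        have hprod' : ∏ i, (fun k => if k = z ∨ k = a then -d k else d k) i < 0 := by
          rw [prod_flip z a hza d]; exact hprod
        have J2 : JoinedIn {C : Mat n | C.det < 0}
            (diagonal fun k => if k = z ∨ k = a then -d k else d k)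
            (diagonal fun i => if i = z then (-1:ℝ) else 1) := by
          refine diag_linear_joined _ _ (fun i => ?_) hprod'
          by_cases hiz : i = z
          · subst hiz
            rw [if_pos (Or.inl rfl), if_pos rfl]
            have h0 : 0 < d i := hdi i fun h' => haz h'.symm
            nlinarith
          · rw [if_neg hiz]
            by_cases hia : i = a
            · subst hia
              rw [if_pos (Or.inr rfl)]
              nlinarith
            · rw [if_neg (by simp [hiz, hia])]
              have := hdi i hia
              nlinarith
        exact J1.symm.trans J2
    | (k + 2), hcard =>
      have h2 : 1 < (Finset.univ.filter fun i => d i < 0).card := by omega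
      obtain ⟨a, haS, b, hbS, hab⟩ := Finset.one_lt_card.mp h2
      have hda : d a < 0 := (Finset.mem_filter.mp haS).2
      have hdb : d b < 0 := (Finset.mem_filter.mp hbS).2
      set d' : Fin n → ℝ := fun k => if k = a ∨ k = b then -d k else d k with hd'
      have J1 : JoinedIn {C : Mat n | C.det < 0} (diagonal d') (diagonal d) :=
        flip_joined a b hab d hprod
      have hprod' : ∏ i, d' i < 0 := by
        rw [hd', prod_flip a b hab d]; exact hprod
      have hd0' : ∀ i, d' i ≠ 0 := by
        intro i
        simp only [hd']
        split
        · simpa using hd0 i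
        · exact hd0 i
      have hfilter : (Finset.univ.filter fun i => d' i < 0)
          = (Finset.univ.filter fun i => d i < 0) \ {a, b} := by
        ext i
        simp only [Finset.mem_filter, Finset.mem_sdiff, Finset.mem_univ, true_and,
          Finset.mem_insert, Finset.mem_singleton, hd']
        by_cases hia : i = a
        · subst hia
          rw [if_pos (Or.inl rfl)]
          constructor
          · intro h'; linarith
          · rintro ⟨-, h'⟩; exact absurd (Or.inl rfl) h'
        · by_cases hib : i = b
          · subst hib
            rw [if_pos (Or.inr rfl)]
            constructor
            · intro h'; linarith
            · rintro ⟨-, h'⟩; exact absurd (Or.inr rfl) h'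
          · rw [if_neg (by simp [hia, hib])]
            simp [hia, hib]
      have hcard' : (Finset.univ.filter fun i => d' i < 0).card = k := by
        rw [hfilter, Finset.card_sdiff_of_subset]
        · rw [hcard, Finset.card_pair hab]
          omega
        · intro x hx
          simp only [Finset.mem_insert, Finset.mem_singleton] at hx
          rcases hx with rfl | rfl
          · exact haS
          · exact hbS
      have J2 := IH k (by omega) d' hcard' hd0' hprod'
      exact J1.symm.trans J2

/-- Any matrix with negative determinant is joined to `diag(-1,1,…,1)` in `{det < 0}`. -/
lemma joined_to_base (z : Fin n) (M : Mat n) (hM : M.det < 0) :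
    JoinedIn {C : Mat n | C.det < 0} M
      (diagonal fun i => if i = z then (-1:ℝ) else 1) := by
  obtain ⟨L, L', D, hLDL⟩ := Matrix.Pivot.exists_list_transvec_mul_diagonal_mul_list_transvec M
  have hD : ∏ i, D i < 0 := by
    have h := hM
    rw [hLDL, det_mul, det_mul, det_toMatrix_prod, det_toMatrix_prod, one_mul, mul_one,
      det_diagonal] at h
    exact h
  have hD0 : ∀ i, D i ≠ 0 := by
    intro i
    have := Finset.prod_ne_zero_iff.mp (ne_of_lt hD)
    exact this i (Finset.mem_univ i)
  have J1 : JoinedIn {C : Mat n | C.det < 0} M (diagonal D) := by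
    rw [hLDL]
    exact transvec_joined L L' _ (by rw [det_diagonal]; exact hD)
  exact J1.trans (diag_joined z _ D rfl hD0 hD)

end NminusAux

open NminusAux

/-- `N⁻ = {(A,B) | det (B - A) < 0}` is open and path-connected in `Mₙ × Mₙ`, for `n ≥ 1`. -/
theorem Nminus_isOpen_isPathConnected (n : ℕ) (hn : 1 ≤ n) :
    IsOpen {p : Matrix (Fin n) (Fin n) ℝ × Matrix (Fin n) (Fin n) ℝ | (p.2 - p.1).det < 0} ∧
    IsPathConnected {p : Matrix (Fin n) (Fin n) ℝ × Matrix (Fin n) (Fin n) ℝ | (p.2 - p.1).det < 0} := by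
  constructor
  · have hc : Continuous fun p : Mat n × Mat n => (p.2 - p.1).det :=
      Continuous.matrix_det (continuous_snd.sub continuous_fst)
    exact isOpen_lt hc continuous_const
  · set z : Fin n := ⟨0, hn⟩
    set E : Mat n := Matrix.diagonal fun i => if i = z then (-1:ℝ) else 1 with hE
    have hEdet : E.det < 0 := by
      rw [hE, Matrix.det_diagonal]
      rw [Fintype.prod_ite_eq' z fun _ => (-1:ℝ)]
      norm_num
    refine ⟨((0 : Mat n), E), ?_, ?_⟩
    · simpa using hEdet
    intro p hp
    have hp' : (p.2 - p.1).det < 0 := hp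
    have Jb : JoinedIn {q : Mat n × Mat n | (q.2 - q.1).det < 0}
        ((0 : Mat n), p.2 - p.1) ((0 : Mat n), E) := by
      have J := (NminusAux.joined_to_base z (p.2 - p.1) hp').map
        (f := fun C : Mat n => ((0 : Mat n), C)) (by fun_prop)
      refine J.mono ?_
      rintro q ⟨C, hC, rfl⟩
      simpa using hC
    have Ja : JoinedIn {q : Mat n × Mat n | (q.2 - q.1).det < 0}
        p ((0 : Mat n), p.2 - p.1) := by
      have hf : Continuous fun t : ℝ => ((p.1 - t • p.1, p.2 - t • p.1) : Mat n × Mat n) := by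
        fun_prop
      have hmem : ∀ t ∈ Set.Icc (0:ℝ) 1,
          ((p.1 - t • p.1, p.2 - t • p.1) : Mat n × Mat n)
            ∈ {q : Mat n × Mat n | (q.2 - q.1).det < 0} := by
        intro t _
        simpa [sub_sub_sub_cancel_right] using hp'
      have h := joinedIn_of_path hf hmem
      simpa using h
    exact ((Ja.trans Jb)).symm
end

section
/- Any function ι : Mₙ × Mₙ → ℝ that is constant on path components of N = {(A,B) : det(B-A) ≠ 0} and satisfies ι(0, id) = 1 takes the value 1 on all of N⁺ = {(A,B) : det(B-A) > 0}. -/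
open Matrix Set

variable {X : Type*} [TopologicalSpace X]

/-- Joined along a continuous real path restricted to `[0,1]`. -/
lemma joinedIn_of_cont {S : Set X} (f : ℝ → X) (hf : Continuous f)
    (h : ∀ t ∈ Icc (0:ℝ) 1, f t ∈ S) : JoinedIn S (f 0) (f 1) :=
  ⟨⟨⟨fun t => f t, hf.comp continuous_subtype_val⟩, by simp, by simp⟩,
    fun t => h t ⟨t.2.1, t.2.2⟩⟩

variable {n : ℕ}

abbrev Sd (n : ℕ) : Set (Matrix (Fin n) (Fin n) ℝ) := {M | M.det ≠ 0}

lemma joinedIn_mul {a b c d : Matrix (Fin n) (Fin n) ℝ}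
    (h1 : JoinedIn (Sd n) a b) (h2 : JoinedIn (Sd n) c d) :
    JoinedIn (Sd n) (a * c) (b * d) := by
  obtain ⟨γ1, hγ1⟩ := h1
  obtain ⟨γ2, hγ2⟩ := h2
  exact ⟨⟨⟨fun t => γ1 t * γ2 t, γ1.continuous.matrix_mul γ2.continuous⟩,
      by simp, by simp⟩,
    fun t => show ((γ1 t * γ2 t) : Matrix _ _ ℝ).det ≠ 0 by
      rw [det_mul]; exact mul_ne_zero (hγ1 t) (hγ2 t)⟩

lemma joinedIn_transvection (t : TransvectionStruct (Fin n) ℝ) :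
    JoinedIn (Sd n) t.toMatrix 1 := by
  have hc : Continuous (fun u : ℝ => Matrix.transvection t.i t.j ((1-u)*t.c)) := by
    simp only [Matrix.transvection]
    refine continuous_const.add (continuous_matrix fun a b => ?_)
    simp only [Matrix.single, Matrix.of_apply]
    split_ifs
    · exact ((continuous_const.sub continuous_id).mul continuous_const)
    · exact continuous_const
  have := joinedIn_of_cont (S := Sd n)
      (fun u => Matrix.transvection t.i t.j ((1-u)*t.c)) hc
      (fun u _ => by simp [Sd, Matrix.det_transvection_of_ne _ _ t.hij])
  simpa [Matrix.transvection_zero, TransvectionStruct.toMatrix] using this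

section rot
variable (i j : Fin n)

noncomputable def Umat : Matrix (Fin n) (Fin 2) ℝ :=
  fun k a => if a = 0 then (if k = i then 1 else 0) else (if k = j then 1 else 0)

noncomputable def Vmat (c s : ℝ) : Matrix (Fin 2) (Fin n) ℝ :=
  fun a k => if a = 0 then (if k = i then c - 1 else if k = j then -s else 0)
    else (if k = i then s else if k = j then c - 1 else 0)

lemma det_rot (hij : i ≠ j) (θ : ℝ) :
    (1 + Umat i j * Vmat i j (Real.cos θ) (Real.sin θ)).det = 1 := by
  rw [Matrix.det_one_add_mul_comm]
  have : Vmat i j (Real.cos θ) (Real.sin θ) * Umat i j =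
      !![Real.cos θ - 1, -Real.sin θ; Real.sin θ, Real.cos θ - 1] := by
    ext a k
    fin_cases a <;> fin_cases k <;>
      simp [Vmat, Umat, Matrix.mul_apply, Fin.sum_univ_succ, hij, hij.symm]
  rw [this]
  have h1 : (1 : Matrix (Fin 2) (Fin 2) ℝ) = !![1,0;0,1] := by
    ext a k; fin_cases a <;> fin_cases k <;> simp
  rw [h1]
  simp [Matrix.det_fin_two]
  nlinarith [Real.sin_sq_add_cos_sq θ]

lemma rot_zero : (1 + Umat i j * Vmat i j 1 0) = 1 := by
  ext k l
  simp [Umat, Vmat, Matrix.mul_apply]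

lemma rot_pi (hij : i ≠ j) :
    (1 + Umat i j * Vmat i j (-1) 0) =
      Matrix.diagonal (fun k => if k = i ∨ k = j then (-1 : ℝ) else 1) := by
  ext k l
  simp only [Matrix.add_apply, Matrix.mul_apply, Umat, Vmat,
    Fin.sum_univ_two, Matrix.diagonal_apply, Matrix.one_apply]
  norm_num
  split_ifs <;> simp_all <;> norm_num

lemma joinedIn_rot (hij : i ≠ j) :
    JoinedIn (Sd n)
      (Matrix.diagonal (fun k => if k = i ∨ k = j then (-1 : ℝ) else 1)) 1 := by
  have hc : Continuous (fun θ : ℝ =>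
      1 + Umat i j * Vmat i j (Real.cos ((1-θ)*Real.pi)) (Real.sin ((1-θ)*Real.pi))) := by
    refine continuous_const.add (continuous_const.matrix_mul ?_)
    refine continuous_matrix fun a k => ?_
    have h1 : Continuous fun θ : ℝ => Real.cos ((1-θ)*Real.pi) :=
      Real.continuous_cos.comp (by continuity)
    have h2 : Continuous fun θ : ℝ => Real.sin ((1-θ)*Real.pi) :=
      Real.continuous_sin.comp (by continuity)
    unfold Vmat
    split_ifs <;> first | exact h1.sub continuous_const | exact h2 | exact h2.neg | exact continuous_const
  have := joinedIn_of_cont (S := Sd n) _ hc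
      (fun θ _ => by simp [Sd, det_rot i j hij])
  simpa [Real.cos_pi, Real.sin_pi, rot_pi i j hij, rot_zero i j] using this

end rot

lemma joinedIn_diag_pm_aux : ∀ (N : ℕ) (s : Fin n → ℝ),
    (Finset.univ.filter fun i => s i = -1).card = N →
    (∀ i, s i = 1 ∨ s i = -1) → Even N →
    JoinedIn (Sd n) (Matrix.diagonal s) 1 := by
  intro N
  induction N using Nat.strong_induction_on with
  | _ N IH =>
    intro s hcard hs he
    rcases N with _ | N
    · have hall : ∀ i, s i = 1 := by
        intro i
        rcases hs i with h | h
        · exact h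
        · exfalso
          have hi : i ∈ Finset.univ.filter fun i => s i = -1 := by
            simp [h]
          rw [Finset.card_eq_zero.mp hcard] at hi
          simp at hi
      have : Matrix.diagonal s = 1 := by
        rw [show s = fun _ => (1:ℝ) from funext hall, Matrix.diagonal_one]
      rw [this]
      exact JoinedIn.refl (by simp [Sd])
    · have hNpos : 0 < N := by
        rcases he with ⟨m, hm⟩; omega
      have h1 : 0 < (Finset.univ.filter fun i => s i = -1).card := by omega
      obtain ⟨i, hi⟩ := Finset.card_pos.mp h1
      have h2 : 0 < ((Finset.univ.filter fun i => s i = -1).erase i).card := by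
        rw [Finset.card_erase_of_mem hi, hcard]; omega
      obtain ⟨j, hj⟩ := Finset.card_pos.mp h2
      have hji : j ≠ i := Finset.ne_of_mem_erase hj
      have hsi : s i = -1 := (Finset.mem_filter.mp hi).2
      have hsj : s j = -1 := (Finset.mem_filter.mp (Finset.mem_of_mem_erase hj)).2
      set s' : Fin n → ℝ := fun k => if k = i ∨ k = j then 1 else s k with hs'def
      have key : Matrix.diagonal (fun k => if k = i ∨ k = j then (-1:ℝ) else 1)
          * Matrix.diagonal s' = Matrix.diagonal s := by
        rw [Matrix.diagonal_mul_diagonal]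
        have : (fun k => (if k = i ∨ k = j then (-1:ℝ) else 1) * s' k) = s := by
          funext k
          by_cases h : k = i ∨ k = j
          · have h1 : s' k = 1 := by rw [hs'def]; simp [h]
            rw [if_pos h, h1]
            rcases h with rfl | rfl
            · rw [hsi]; ring
            · rw [hsj]; ring
          · have h1 : s' k = s k := by rw [hs'def]; simp [h]
            rw [if_neg h, h1, one_mul]
        rw [this]
      have hs' : ∀ k, s' k = 1 ∨ s' k = -1 := by
        intro k
        by_cases h : k = i ∨ k = j
        · left; simp [s', h]
        · simpa [s', h] using hs k
      have hset : (Finset.univ.filter fun k => s' k = -1)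
          = ((Finset.univ.filter fun k => s k = -1).erase i).erase j := by
        ext k
        by_cases hki : k = i <;> by_cases hkj : k = j <;>
          simp_all [s', Finset.mem_erase] <;> norm_num
      have hcard' : (Finset.univ.filter fun k => s' k = -1).card = N - 1 := by
        rw [hset, Finset.card_erase_of_mem hj, Finset.card_erase_of_mem hi, hcard]
        omega
      have he' : Even (N - 1) := by
        rcases he with ⟨m, hm⟩; exact ⟨m - 1, by omega⟩
      have hIH := IH (N - 1) (by omega) s' hcard' hs' he'
      have hrot := joinedIn_rot i j (Ne.symm hji)
      have := joinedIn_mul hrot hIH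
      rw [key, one_mul] at this
      exact this

lemma joinedIn_diag_pm (s : Fin n → ℝ) (hs : ∀ i, s i = 1 ∨ s i = -1)
    (hpos : 0 < ∏ i, s i) : JoinedIn (Sd n) (Matrix.diagonal s) 1 := by
  have hprod : (∏ i, s i) = (-1 : ℝ) ^ (Finset.univ.filter fun i => s i = -1).card := by
    rw [← Finset.prod_filter_mul_prod_filter_not Finset.univ (fun i => s i = -1)]
    rw [Finset.prod_congr rfl (fun i hi => (Finset.mem_filter.mp hi).2),
      Finset.prod_const]
    have : ∀ i ∈ Finset.univ.filter fun i => ¬ s i = -1, s i = 1 := by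
      intro i hi
      rcases hs i with h | h
      · exact h
      · exact absurd h (Finset.mem_filter.mp hi).2
    rw [Finset.prod_congr rfl this, Finset.prod_const, one_pow, mul_one]
  have heven : Even (Finset.univ.filter fun i => s i = -1).card := by
    by_contra hodd
    rw [hprod, (Nat.not_even_iff_odd.mp hodd).neg_one_pow] at hpos
    linarith
  exact joinedIn_diag_pm_aux _ s rfl hs heven

lemma joinedIn_diagonal (d : Fin n → ℝ) (hd : ∀ i, d i ≠ 0) :
    JoinedIn (Sd n) (Matrix.diagonal d)
      (Matrix.diagonal fun i => if d i < 0 then (-1:ℝ) else 1) := by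
  have hc : Continuous (fun t : ℝ => Matrix.diagonal
      (fun i => (1-t) * d i + t * (if d i < 0 then (-1:ℝ) else 1))) := by
    refine Continuous.matrix_diagonal (continuous_pi fun i => ?_)
    exact ((continuous_const.sub continuous_id).mul continuous_const).add
      (continuous_id.mul continuous_const)
  have hmem : ∀ t ∈ Icc (0:ℝ) 1, Matrix.diagonal
      (fun i => (1-t) * d i + t * (if d i < 0 then (-1:ℝ) else 1)) ∈ Sd n := by
    intro t ht
    simp only [Sd, mem_setOf_eq, Matrix.det_diagonal]
    refine Finset.prod_ne_zero_iff.mpr fun i _ => ?_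
    rcases lt_or_gt_of_ne (hd i) with h | h
    · rw [if_pos h]
      rcases eq_or_lt_of_le ht.1 with heq | htpos
      · simp only [← heq]
        simpa using hd i
      · have h1 : (1-t) * d i ≤ 0 :=
          mul_nonpos_of_nonneg_of_nonpos (by linarith [ht.2]) h.le
        intro habs; nlinarith
    · rw [if_neg (not_lt.mpr h.le)]
      rcases eq_or_lt_of_le ht.1 with heq | htpos
      · simp only [← heq]
        simpa using hd i
      · have h1 : 0 ≤ (1-t) * d i := mul_nonneg (by linarith [ht.2]) h.le
        intro habs; nlinarith
  have := joinedIn_of_cont (S := Sd n) _ hc hmem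
  simpa using this

lemma joined_one_of_det_pos (M : Matrix (Fin n) (Fin n) ℝ) (h : 0 < M.det) :
    JoinedIn (Sd n) M 1 := by
  rcases Nat.eq_zero_or_pos n with rfl | hn
  · rw [Subsingleton.elim M 1]
    exact JoinedIn.refl (by simp [Sd])
  set i₀ : Fin n := ⟨0, hn⟩
  set w : Fin n → ℝ := fun k => if k = i₀ then (-1:ℝ) else 1 with hw
  set W := Matrix.diagonal w with hW
  have hprodw : (∏ k, w k) = -1 := by
    rw [hw]; simp [Finset.prod_ite_eq']
  have hWdet : W.det = -1 := by
    rw [hW, Matrix.det_diagonal, hprodw]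
  have hWW : W * W = 1 := by
    rw [hW, Matrix.diagonal_mul_diagonal]
    have : (fun k => w k * w k) = fun _ => (1:ℝ) := by
      funext k; by_cases hk : k = i₀ <;> simp [hw, hk]
    rw [this, Matrix.diagonal_one]
  have hP : JoinedIn (Sd n) M (if 0 < M.det then 1 else W) := by
    apply Matrix.diagonal_transvection_induction_of_det_ne_zero
      (fun A => JoinedIn (Sd n) A (if 0 < A.det then 1 else W)) M (ne_of_gt h)
    · intro D hD
      have hDi : ∀ i, D i ≠ 0 := by
        rw [Matrix.det_diagonal] at hD
        exact fun i hz => hD (Finset.prod_eq_zero (Finset.mem_univ i) hz)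
      have step1 := joinedIn_diagonal D hDi
      set s : Fin n → ℝ := fun i => if D i < 0 then (-1:ℝ) else 1 with hsdef
      have hs : ∀ i, s i = 1 ∨ s i = -1 := fun i => by
        by_cases hDlt : D i < 0 <;> simp [hsdef, hDlt]
      have hsD : 0 < (∏ i, s i) * ∏ i, D i := by
        rw [← Finset.prod_mul_distrib]
        refine Finset.prod_pos fun i _ => ?_
        rcases lt_or_gt_of_ne (hDi i) with hneg | hpos
        · simp only [hsdef, if_pos hneg]; nlinarith
        · simp only [hsdef, if_neg (not_lt.mpr hpos.le)]; nlinarith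
      by_cases hpos : 0 < (Matrix.diagonal D).det
      · rw [if_pos hpos]
        rw [Matrix.det_diagonal] at hpos
        have hspos : 0 < ∏ i, s i := by
          rcases mul_pos_iff.mp hsD with ⟨h1, _⟩ | ⟨_, h2⟩
          · exact h1
          · linarith
        exact step1.trans (joinedIn_diag_pm s hs hspos)
      · rw [if_neg hpos]
        have hdetneg : (∏ i, D i) < 0 := by
          have h1 : (∏ i, D i) ≠ 0 := by rwa [Matrix.det_diagonal] at hD
          have h2 : ¬ 0 < ∏ i, D i := by rwa [Matrix.det_diagonal] at hpos
          exact lt_of_le_of_ne (not_lt.mp h2) h1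
        have hsneg : (∏ i, s i) < 0 := by
          rcases mul_pos_iff.mp hsD with ⟨_, h2⟩ | ⟨h1, _⟩
          · linarith
          · exact h1
        set s'' : Fin n → ℝ := fun k => w k * s k with hs''def
        have hkey : Matrix.diagonal s = W * Matrix.diagonal s'' := by
          rw [hW, Matrix.diagonal_mul_diagonal]
          have hfun : (fun k => w k * s'' k) = s := by
            funext k
            show w k * (w k * s k) = s k
            have hww : w k * w k = 1 := by by_cases hk : k = i₀ <;> simp [hw, hk]
            rw [← mul_assoc, hww, one_mul]
          rw [hfun]
        have hs'' : ∀ k, s'' k = 1 ∨ s'' k = -1 := fun k => by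
          by_cases hk : k = i₀
          · subst hk; rcases hs i₀ with h' | h' <;> simp [hs''def, hw, h']
          · rcases hs k with h' | h' <;> simp [hs''def, hw, hk, h']
        have hs''pos : 0 < ∏ k, s'' k := by
          rw [hs''def, Finset.prod_mul_distrib, hprodw]
          nlinarith
        have h2 := joinedIn_diag_pm s'' hs'' hs''pos
        have h3 := joinedIn_mul (JoinedIn.refl (x := W) (by simp [Sd, hWdet])) h2
        rw [mul_one] at h3
        exact step1.trans (hkey ▸ h3)
    · intro t
      have hdet : (0:ℝ) < (Matrix.TransvectionStruct.toMatrix t).det := by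
        rw [Matrix.TransvectionStruct.det]; norm_num
      rw [if_pos hdet]
      exact joinedIn_transvection t
    · intro A B hA hB PA PB
      have hj := joinedIn_mul PA PB
      show JoinedIn (Sd n) (A * B) (if 0 < (A * B).det then 1 else W)
      rw [Matrix.det_mul]
      rcases hA.lt_or_gt with hA' | hA' <;> rcases hB.lt_or_gt with hB' | hB'
      · rw [if_pos (mul_pos_of_neg_of_neg hA' hB')]
        rw [if_neg (not_lt.mpr hA'.le), if_neg (not_lt.mpr hB'.le), hWW] at hj
        exact hj
      · rw [if_neg (not_lt.mpr (mul_nonpos_of_nonpos_of_nonneg hA'.le hB'.le))]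
        rw [if_neg (not_lt.mpr hA'.le), if_pos hB', mul_one] at hj
        exact hj
      · rw [if_neg (not_lt.mpr (mul_nonpos_of_nonneg_of_nonpos hA'.le hB'.le))]
        rw [if_pos hA', if_neg (not_lt.mpr hB'.le), one_mul] at hj
        exact hj
      · rw [if_pos (mul_pos hA' hB')]
        rw [if_pos hA', if_pos hB', mul_one] at hj
        exact hj
  rwa [if_pos h] at hP


/-- Any `ι : Mₙ × Mₙ → ℝ` that is constant on path components of
`N = {(A,B) | det (B - A) ≠ 0}` and has `ι (0, id) = 1` equals `1` on all of `N⁺`. -/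
theorem index_one_on_Nplus (n : ℕ)
    (ι : Matrix (Fin n) (Fin n) ℝ × Matrix (Fin n) (Fin n) ℝ → ℝ)
    (hpath : ∀ p q, JoinedIn {r : Matrix (Fin n) (Fin n) ℝ × Matrix (Fin n) (Fin n) ℝ |
      (r.2 - r.1).det ≠ 0} p q → ι p = ι q)
    (hnorm : ι (0, 1) = 1) :
    ∀ p : Matrix (Fin n) (Fin n) ℝ × Matrix (Fin n) (Fin n) ℝ,
      0 < (p.2 - p.1).det → ι p = 1 := by
  intro p hp
  have h1 : JoinedIn {r : Matrix (Fin n) (Fin n) ℝ × Matrix (Fin n) (Fin n) ℝ |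
      (r.2 - r.1).det ≠ 0} p (0, p.2 - p.1) := by
    have hc : Continuous (fun t : ℝ =>
        (((1-t) • p.1, p.2 - t • p.1) : Matrix (Fin n) (Fin n) ℝ × Matrix (Fin n) (Fin n) ℝ)) :=
      ((continuous_const.sub continuous_id).smul continuous_const).prodMk
        (continuous_const.sub (continuous_id.smul continuous_const))
    have hmem : ∀ t ∈ Icc (0:ℝ) 1,
        (((1-t) • p.1, p.2 - t • p.1) : Matrix (Fin n) (Fin n) ℝ × Matrix (Fin n) (Fin n) ℝ)
          ∈ {r : Matrix (Fin n) (Fin n) ℝ × Matrix (Fin n) (Fin n) ℝ | (r.2 - r.1).det ≠ 0} := by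
      intro t _
      show ((p.2 - t • p.1) - (1-t) • p.1).det ≠ 0
      have he : (p.2 - t • p.1) - (1-t) • p.1 = p.2 - p.1 := by
        rw [sub_smul, one_smul]; abel
      rw [he]
      exact ne_of_gt hp
    have := joinedIn_of_cont _ hc hmem
    simpa using this
  have h2 : JoinedIn (Sd n) (p.2 - p.1) 1 := joined_one_of_det_pos _ hp
  have h3 : JoinedIn {r : Matrix (Fin n) (Fin n) ℝ × Matrix (Fin n) (Fin n) ℝ |
      (r.2 - r.1).det ≠ 0} ((0 : Matrix (Fin n) (Fin n) ℝ), p.2 - p.1) (0, 1) := by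
    obtain ⟨γ, hγ⟩ := h2
    exact ⟨⟨⟨fun t => (0, γ t), continuous_const.prodMk γ.continuous⟩, by simp, by simp⟩,
      fun t => by simpa [Sd] using hγ t⟩
  rw [hpath p (0, 1) (h1.trans h3), hnorm]
end

section
/- Let f, g : U → ℝⁿ be differentiable at p with f(p) = g(p), and write f(x) = f(p) + df_p(x-p) + |x-p| ε(x-p) and g(x) = g(p) + dg_p(x-p) + |x-p| δ(x-p) with ε, δ continuous and ε(0) = δ(0) = 0. If dg_p - df_p is invertible, then there is a neighborhood W of p such that for all t ∈ [0,1] and all x ∈ W with x ≠ p, the maps f_t(x) = f(p) + df_p(x-p) + t|x-p|ε(x-p) and g_t(x) = g(p) + dg_p(x-p) + t|x-p|δ(x-p) satisfy g_t(x) ≠ f_t(x). -/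
/-- Admissibility of the straight-line linearization homotopy near a
nondegenerate coincidence point. -/
theorem linearization_homotopy_admissible (n : ℕ)
    (f g : (Fin n → ℝ) → (Fin n → ℝ)) (U : Set (Fin n → ℝ)) (hU : IsOpen U)
    (p : Fin n → ℝ) (hp : p ∈ U)
    (f' g' : (Fin n → ℝ) →L[ℝ] (Fin n → ℝ))
    (ε δ : (Fin n → ℝ) → (Fin n → ℝ))
    (hε : Continuous ε) (hδ : Continuous δ)
    (hε0 : ε 0 = 0) (hδ0 : δ 0 = 0)
    (hfe : ∀ x, f x = f p + f' (x - p) + ‖x - p‖ • ε (x - p))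
    (hge : ∀ x, g x = g p + g' (x - p) + ‖x - p‖ • δ (x - p))
    (hcoin : f p = g p)
    (hinv : Function.Bijective (g' - f')) :
    ∃ W ∈ nhds p, ∀ t ∈ Set.Icc (0 : ℝ) 1, ∀ x ∈ W, x ≠ p →
      g p + g' (x - p) + (t * ‖x - p‖) • δ (x - p) ≠
      f p + f' (x - p) + (t * ‖x - p‖) • ε (x - p) := by
  set T : (Fin n → ℝ) →L[ℝ] (Fin n → ℝ) := g' - f' with hT
  -- get an antilipschitz constant for T
  let e₀ : (Fin n → ℝ) ≃ₗ[ℝ] (Fin n → ℝ) :=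
    LinearEquiv.ofBijective (T : (Fin n → ℝ) →ₗ[ℝ] (Fin n → ℝ)) hinv
  let e : (Fin n → ℝ) ≃L[ℝ] (Fin n → ℝ) := e₀.toContinuousLinearEquiv
  set K : ℝ := ‖(e.symm : (Fin n → ℝ) →L[ℝ] (Fin n → ℝ))‖ + 1 with hKdef
  have hKpos : 0 < K := by positivity
  have hanti : ∀ v : Fin n → ℝ, ‖v‖ ≤ K * ‖T v‖ := by
    intro v
    have h1 : ‖v‖ ≤ ‖(e.symm : (Fin n → ℝ) →L[ℝ] (Fin n → ℝ))‖ * ‖e v‖ := by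
      have := (e.symm : (Fin n → ℝ) →L[ℝ] (Fin n → ℝ)).le_opNorm (e v)
      simpa using this
    have hev : e v = T v := rfl
    rw [hev] at h1
    nlinarith [norm_nonneg (T v)]
  -- neighborhood where the remainder difference is small
  have hcont : Continuous fun v => ‖ε v - δ v‖ := ((hε.sub hδ).norm)
  have h0 : ‖ε 0 - δ 0‖ < 1 / K := by
    rw [hε0, hδ0]; simp [one_div, hKpos]
  have hV : {v : Fin n → ℝ | ‖ε v - δ v‖ < 1 / K} ∈ nhds 0 :=
    (hcont.continuousAt (x := 0)).preimage_mem_nhds (Iio_mem_nhds h0)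
  have hW : (fun x : Fin n → ℝ => x - p) ⁻¹' {v | ‖ε v - δ v‖ < 1 / K} ∈ nhds p := by
    apply (continuous_id.sub continuous_const).continuousAt.preimage_mem_nhds
    simpa using hV
  refine ⟨_, hW, ?_⟩
  rintro t ⟨ht0, ht1⟩ x hx hxp heq
  set v : Fin n → ℝ := x - p with hv
  have hvne : v ≠ 0 := sub_ne_zero.mpr hxp
  have hvpos : 0 < ‖v‖ := norm_pos_iff.mpr hvne
  have hsmall : ‖ε v - δ v‖ < 1 / K := hx
  -- derive the key equation
  rw [hcoin] at heq
  have h1 : g' v + (t * ‖v‖) • δ v = f' v + (t * ‖v‖) • ε v := by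
    have := heq
    rw [add_assoc, add_assoc] at this
    exact add_left_cancel this
  have hkey : T v = (t * ‖v‖) • (ε v - δ v) := by
    have : T v = g' v - f' v := rfl
    rw [this, smul_sub]
    rw [sub_eq_sub_iff_add_eq_add]
    rw [add_comm (f' v)] at h1
    exact h1
  -- norm estimates yield a contradiction
  have hn : ‖T v‖ = (t * ‖v‖) * ‖ε v - δ v‖ := by
    rw [hkey, norm_smul, Real.norm_eq_abs, abs_of_nonneg (by positivity)]
  have h2 : ‖v‖ ≤ K * ((t * ‖v‖) * ‖ε v - δ v‖) := by
    rw [← hn]; exact hanti v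
  have h3 : (t * ‖v‖) * ‖ε v - δ v‖ ≤ ‖v‖ * ‖ε v - δ v‖ := by
    have hN : 0 ≤ ‖ε v - δ v‖ := norm_nonneg _
    nlinarith [mul_nonneg (mul_nonneg (sub_nonneg.mpr ht1) hvpos.le) hN]
  have h4 : ‖v‖ * ‖ε v - δ v‖ < ‖v‖ * (1 / K) := by
    exact mul_lt_mul_of_pos_left hsmall hvpos
  have h5 : K * (‖v‖ * (1 / K)) = ‖v‖ := by
    field_simp
  have h6 := mul_lt_mul_of_pos_left (lt_of_le_of_lt h3 h4) hKpos
  rw [h5] at h6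
  linarith
end

section
/- Let f, g : U → ℝⁿ (U ⊆ ℝⁿ open) be differentiable maps such that at every coincidence point p ∈ Coin(f,g,U) the map dg_p - df_p is invertible, and suppose Coin(f,g,U) is compact. Then Coin(f,g,U) is a finite set. -/
open Filter Topology

/-- By the open mapping theorem `dg_p - df_p` is anti-Lipschitz, so `g - f`, whose derivative at
`p` it is, does not vanish on a punctured neighbourhood of `p`. -/
theorem isDiscrete_coincidenceSet {𝕜 E F : Type*} [NontriviallyNormedField 𝕜]
    [NormedAddCommGroup E] [NormedSpace 𝕜 E] [CompleteSpace E]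
    [NormedAddCommGroup F] [NormedSpace 𝕜 F] [CompleteSpace F]
    {f g : E → F} {s : Set E}
    (hf : ∀ p ∈ {x ∈ s | f x = g x}, DifferentiableAt 𝕜 f p)
    (hg : ∀ p ∈ {x ∈ s | f x = g x}, DifferentiableAt 𝕜 g p)
    (hnd : ∀ p ∈ {x ∈ s | f x = g x}, Function.Bijective (fderiv 𝕜 g p - fderiv 𝕜 f p)) :
    IsDiscrete {x ∈ s | f x = g x} := by
  refine isDiscrete_iff_nhdsNE.2 fun p hp ↦ ?_
  have hanti := ((fderiv 𝕜 g p - fderiv 𝕜 f p).bijective_iff_dense_range_and_antilipschitz.1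
    (hnd p hp)).2
  have hne : ∀ᶠ x in 𝓝[≠] p, g x - f x ≠ 0 :=
    ((hg p hp).hasFDerivAt.sub (hf p hp).hasFDerivAt).eventually_ne hanti
  rw [inf_principal_eq_bot]
  filter_upwards [hne] with x hx hxS
  exact hx (sub_eq_zero.2 hxS.2.symm)

theorem nondegenerate_coincidence_finite_general (n : ℕ)
    (f g : (Fin n → ℝ) → (Fin n → ℝ)) (U : Set (Fin n → ℝ))
    (hf : ∀ x ∈ U, DifferentiableAt ℝ f x) (hg : ∀ x ∈ U, DifferentiableAt ℝ g x)
    (hnd : ∀ p ∈ {x ∈ U | f x = g x},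
      Function.Bijective (fderiv ℝ g p - fderiv ℝ f p))
    (hc : IsCompact {x ∈ U | f x = g x}) :
    {x ∈ U | f x = g x}.Finite :=
  hc.finite (isDiscrete_coincidenceSet (fun p hp ↦ hf p hp.1) (fun p hp ↦ hg p hp.1) hnd)

/-- A nondegenerate triple has finitely many coincidence points: if `f, g` are
differentiable on the open set `U`, `dg_p - df_p` is invertible at each coincidence
point, and the coincidence set is compact, then it is finite. -/
theorem nondegenerate_coincidence_finite (n : ℕ)
    (f g : (Fin n → ℝ) → (Fin n → ℝ)) (U : Set (Fin n → ℝ)) (hU : IsOpen U)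
    (hf : ∀ x ∈ U, DifferentiableAt ℝ f x) (hg : ∀ x ∈ U, DifferentiableAt ℝ g x)
    (hnd : ∀ p ∈ {x ∈ U | f x = g x},
      Function.Bijective (fderiv ℝ g p - fderiv ℝ f p))
    (hc : IsCompact {x ∈ U | f x = g x}) :
    {x ∈ U | f x = g x}.Finite :=
  nondegenerate_coincidence_finite_general n f g U hf hg hnd hc
end
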